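/- arXiv:0711.2188 — 4 statements merged into one kernel-verified Lean document; each statement's English description precedes it below -/
import Mathlib

section
/- Let 0 < φ < ψ < ∞, β > 1/2, c₁ > 0 and c₂ > 0 be constants. For each n ∈ ℕ set ℓ¹ₙ = ⌊c₁ nᵝ⌋ and ℓ²ₙ = ⌊c₂ nᵝ⌋, and let φⁿᵢ (1 ≤ i ≤ ℓ¹ₙ) and ψⁿᵢ (1 ≤ i ≤ ℓ²ₙ) be positive reals with sup_{n,i} φⁿᵢ ≤ φ < ψ ≤ inf_{n,i} ψⁿᵢ. For each n let Φⁿ₁,…,Φⁿ_{ℓ¹ₙ} be mutually independent random variables with Φⁿᵢ exponentially distributed with rate φⁿᵢ, and let Ψⁿ₁,…,Ψⁿ_{ℓ²ₙ} be mutually independent random variables with Ψⁿᵢ exponentially distributed with rate ψⁿᵢ. Then there exist constants γ > 0 and κ > 0 such that, with θₙ = γ log n, both P(#{i ≤ ℓ¹ₙ : Φⁿᵢ ≥ θₙ} ≤ n^{1/2+κ}) → 0 and P(#{i ≤ ℓ²ₙ : Ψⁿᵢ ≥ θₙ} ≥ n^{1/2−κ}) → 0 as n → ∞. -/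
/-!
With `θₙ = γ log n`, each `Φⁿᵢ` exceeds `θₙ` with probability at least `n^(-γφ)` and each `Ψⁿᵢ`
with probability at most `n^(-γψ)`, so the expected numbers of exceedances are of order
`n^(β - γφ)` and `n^(β - γψ)`. Choosing `γ` so that these exponents lie at `1/2 ± 2κ`, Chebyshev's
inequality for the sum of independent indicators (whose variance is at most its mean) controls the
first probability and Markov's inequality the second.
-/

open MeasureTheory ProbabilityTheory Filter

/-- A real random variable `X` is exponentially distributed with rate `rate > 0` if
`P(X > t) = exp(-rate * t)` for every `t ≥ 0`. -/
def IsExpRV {Ω : Type*} [MeasurableSpace Ω] (P : Measure Ω) (rate : ℝ) (X : Ω → ℝ) : Prop :=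
  Measurable X ∧ ∀ t : ℝ, 0 ≤ t → P {ω | t < X ω} = ENNReal.ofReal (Real.exp (-rate * t))

open Topology

lemma natCard_mem_eq_sum_indicator {Ω ι : Type*} [Fintype ι] (A : ι → Set Ω) (ω : Ω) :
    (Nat.card {i // ω ∈ A i} : ℝ) = (∑ i, (A i).indicator (1 : Ω → ℝ)) ω := by
  classical
  simp only [Finset.sum_apply, Set.indicator_apply, Pi.one_apply]
  rw [Finset.sum_boole, Nat.card_eq_fintype_card, Fintype.card_subtype]

section Counting

variable {Ω ι : Type*} [MeasurableSpace Ω] {P : Measure Ω} [Fintype ι] {A : ι → Set Ω}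

lemma memLp_indicator_one [IsFiniteMeasure P] {s : Set Ω} (hs : MeasurableSet s) :
    MemLp (s.indicator (1 : Ω → ℝ)) 2 P :=
  memLp_indicator_const 2 hs 1 (Or.inr (measure_ne_top P _))

lemma integral_sum_indicator_one [IsFiniteMeasure P] (hA : ∀ i, MeasurableSet (A i)) :
    P[∑ i, (A i).indicator (1 : Ω → ℝ)] = ∑ i, P.real (A i) := by
  simp only [Finset.sum_apply]
  rw [integral_finsetSum _ fun i _ => (memLp_indicator_one (hA i)).integrable one_le_two]
  exact Finset.sum_congr rfl fun i _ => integral_indicator_one (hA i)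

lemma variance_indicator_one_le [IsProbabilityMeasure P] {s : Set Ω} (hs : MeasurableSet s) :
    variance (s.indicator (1 : Ω → ℝ)) P ≤ P.real s := by
  have hsq : s.indicator (1 : Ω → ℝ) ^ 2 = s.indicator 1 := by
    ext ω
    by_cases h : ω ∈ s <;> simp [h]
  calc variance (s.indicator (1 : Ω → ℝ)) P ≤ P[s.indicator (1 : Ω → ℝ) ^ 2] :=
        variance_le_expectation_sq (memLp_indicator_one hs).1
    _ = P.real s := by rw [hsq, integral_indicator_one hs]

lemma measure_le_natCard_mem_le [IsFiniteMeasure P] (hA : ∀ i, MeasurableSet (A i))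
    {b : ℝ} (hb : 0 < b) :
    P {ω | b ≤ Nat.card {i // ω ∈ A i}} ≤ ENNReal.ofReal ((∑ i, P.real (A i)) / b) := by
  have hS : Integrable (∑ i, (A i).indicator (1 : Ω → ℝ)) P :=
    (memLp_finsetSum' _ fun i _ => memLp_indicator_one (hA i)).integrable one_le_two
  have hS0 : 0 ≤ᵐ[P] ∑ i, (A i).indicator (1 : Ω → ℝ) :=
    Eventually.of_forall fun ω => by
      rw [← natCard_mem_eq_sum_indicator]
      positivity
  have hmarkov := mul_meas_ge_le_integral_of_nonneg hS0 hS b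
  rw [integral_sum_indicator_one hA] at hmarkov
  simp_rw [← natCard_mem_eq_sum_indicator] at hmarkov
  rw [← ofReal_measureReal]
  exact ENNReal.ofReal_le_ofReal ((le_div_iff₀' hb).2 hmarkov)

lemma measure_natCard_mem_le_half_le [IsProbabilityMeasure P] (hA : ∀ i, MeasurableSet (A i))
    (hind : iIndepSet A P) (hm : 0 < ∑ i, P.real (A i)) :
    P {ω | (Nat.card {i // ω ∈ A i} : ℝ) ≤ (∑ i, P.real (A i)) / 2}
      ≤ ENNReal.ofReal (4 / ∑ i, P.real (A i)) := by
  set S := ∑ i, (A i).indicator (1 : Ω → ℝ)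
  set m := ∑ i, P.real (A i)
  have hmean : P[S] = m := integral_sum_indicator_one hA
  have hvar : variance S P ≤ m := by
    rw [IndepFun.variance_sum (fun i _ => memLp_indicator_one (hA i))
      fun i _ j _ hij => hind.iIndepFun_indicator.indepFun hij]
    exact Finset.sum_le_sum fun i _ => variance_indicator_one_le (hA i)
  calc P {ω | (Nat.card {i // ω ∈ A i} : ℝ) ≤ m / 2}
      ≤ P {ω | m / 2 ≤ |S ω - P[S]|} := by
        refine measure_mono fun ω (hω : (Nat.card {i // ω ∈ A i} : ℝ) ≤ m / 2) => ?_
        rw [natCard_mem_eq_sum_indicator] at hω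
        change m / 2 ≤ |S ω - P[S]|
        rw [hmean, abs_sub_comm]
        exact (by linarith : m / 2 ≤ m - S ω).trans (le_abs_self _)
    _ ≤ ENNReal.ofReal (variance S P / (m / 2) ^ 2) :=
        meas_ge_le_variance_div_sq (memLp_finsetSum' _ fun i _ => memLp_indicator_one (hA i))
          (half_pos hm)
    _ ≤ ENNReal.ofReal (4 / m) := by
        refine ENNReal.ofReal_le_ofReal ?_
        calc variance S P / (m / 2) ^ 2 ≤ m / (m / 2) ^ 2 := by gcongr
          _ = 4 / m := by field_simp; ring

end Counting

section Exponential

variable {Ω ι : Type*} [MeasurableSpace Ω] {P : Measure Ω}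

/-- The definition only prescribes the strict tail; the closed tail follows by continuity from
the left. -/
lemma IsExpRV.measure_le_eq {r : ℝ} {X : Ω → ℝ} (hX : IsExpRV P r X) {t : ℝ} (ht : 0 < t) :
    P {ω | t ≤ X ω} = ENNReal.ofReal (Real.exp (-r * t)) := by
  refine le_antisymm ?_ ?_
  · have hcont : Tendsto (fun s => ENNReal.ofReal (Real.exp (-r * s))) (𝓝[<] t)
        (𝓝 (ENNReal.ofReal (Real.exp (-r * t)))) :=
      ((ENNReal.continuous_ofReal.comp (by fun_prop)).tendsto t).mono_left nhdsWithin_le_nhds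
    refine ge_of_tendsto hcont ?_
    filter_upwards [Ioo_mem_nhdsLT ht] with s hs
    rw [← hX.2 s hs.1.le]
    exact measure_mono fun ω hω => hs.2.trans_le hω
  · rw [← hX.2 t ht.le]
    exact measure_mono fun ω (hω : t < X ω) => hω.le

lemma IsExpRV.measureReal_le_eq {r : ℝ} {X : Ω → ℝ} (hX : IsExpRV P r X) {t : ℝ} (ht : 0 < t) :
    P.real {ω | t ≤ X ω} = Real.exp (-r * t) := by
  rw [measureReal_def, hX.measure_le_eq ht, ENNReal.toReal_ofReal (Real.exp_pos _).le]

variable [Fintype ι] {X : ι → Ω → ℝ} {rate : ι → ℝ} {t b : ℝ}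

lemma measure_natCard_le_le_of_rate_le [IsProbabilityMeasure P] {φ : ℝ}
    (hX : ∀ i, IsExpRV P (rate i) (X i)) (hrate : ∀ i, rate i ≤ φ) (hind : iIndepFun X P)
    (ht : 0 < t) (hb : 0 < b) (hbφ : 2 * b ≤ Fintype.card ι * Real.exp (-φ * t)) :
    P {ω | (Nat.card {i // t ≤ X i ω} : ℝ) ≤ b} ≤ ENNReal.ofReal (2 / b) := by
  set A : ι → Set Ω := fun i => {ω | t ≤ X i ω}
  have hA : ∀ i, MeasurableSet (A i) := fun i => (hX i).1 measurableSet_Ici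
  have hmean : 2 * b ≤ ∑ i, P.real (A i) := by
    refine hbφ.trans ?_
    rw [← nsmul_eq_mul, ← Finset.card_univ, ← Finset.sum_const]
    refine Finset.sum_le_sum fun i _ => ?_
    rw [(hX i).measureReal_le_eq ht]
    gcongr
    exact hrate i
  have hind' : iIndepSet A P := (iIndepSet_iff_meas_biInter hA).2 fun s =>
    hind.measure_inter_preimage_eq_mul s fun _ _ => measurableSet_Ici
  calc P {ω | (Nat.card {i // t ≤ X i ω} : ℝ) ≤ b}
      ≤ P {ω | (Nat.card {i // ω ∈ A i} : ℝ) ≤ (∑ i, P.real (A i)) / 2} :=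
        measure_mono fun ω (hω : (Nat.card {i // t ≤ X i ω} : ℝ) ≤ b) => hω.trans (by linarith)
    _ ≤ ENNReal.ofReal (4 / ∑ i, P.real (A i)) :=
        measure_natCard_mem_le_half_le hA hind' (by linarith)
    _ ≤ ENNReal.ofReal (2 / b) := by
        refine ENNReal.ofReal_le_ofReal ?_
        rw [div_le_div_iff₀ (by linarith) hb]
        linarith

lemma measure_le_natCard_le_of_le_rate [IsFiniteMeasure P] {ψ : ℝ}
    (hX : ∀ i, IsExpRV P (rate i) (X i)) (hrate : ∀ i, ψ ≤ rate i) (ht : 0 < t) (hb : 0 < b) :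
    P {ω | b ≤ (Nat.card {i // t ≤ X i ω} : ℝ)}
      ≤ ENNReal.ofReal (Fintype.card ι * Real.exp (-ψ * t) / b) := by
  have hA : ∀ i, MeasurableSet {ω | t ≤ X i ω} := fun i => (hX i).1 measurableSet_Ici
  refine (measure_le_natCard_mem_le hA hb).trans (ENNReal.ofReal_le_ofReal ?_)
  gcongr
  rw [← nsmul_eq_mul, ← Finset.card_univ, ← Finset.sum_const]
  refine Finset.sum_le_sum fun i _ => ?_
  rw [(hX i).measureReal_le_eq ht]
  gcongr
  exact hrate i

end Exponential

section Asymptotics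

lemma exp_neg_mul_mul_log {x : ℝ} (hx : 0 < x) (r γ a : ℝ) :
    Real.exp (-r * (γ * Real.log x)) = x ^ a / x ^ (a + γ * r) := by
  rw [← Real.rpow_sub hx, Real.rpow_def_of_pos hx]
  ring_nf

variable {c a b : ℝ}

lemma natFloor_mul_rpow_div_rpow_eventuallyEq (hc : 0 < c) :
    (fun n : ℕ => (⌊c * (n : ℝ) ^ b⌋₊ : ℝ) / (n : ℝ) ^ a) =ᶠ[atTop]
      fun n => (⌊c * (n : ℝ) ^ b⌋₊ : ℝ) / (c * (n : ℝ) ^ b) * (c * (n : ℝ) ^ (b - a)) := by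
  filter_upwards [eventually_gt_atTop 0] with n hn
  have hn' : (0 : ℝ) < n := Nat.cast_pos.2 hn
  rw [Real.rpow_sub hn']
  field_simp

lemma tendsto_natFloor_mul_rpow_div_self (hc : 0 < c) (hb : 0 < b) :
    Tendsto (fun n : ℕ => (⌊c * (n : ℝ) ^ b⌋₊ : ℝ) / (c * (n : ℝ) ^ b)) atTop (𝓝 1) :=
  tendsto_nat_floor_div_atTop.comp
    (((tendsto_rpow_atTop hb).comp tendsto_natCast_atTop_atTop).const_mul_atTop hc)

lemma tendsto_natFloor_mul_rpow_div_rpow_atTop (hc : 0 < c) (hb : 0 < b) (hab : a < b) :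
    Tendsto (fun n : ℕ => (⌊c * (n : ℝ) ^ b⌋₊ : ℝ) / (n : ℝ) ^ a) atTop atTop := by
  refine (Tendsto.pos_mul_atTop one_pos (tendsto_natFloor_mul_rpow_div_self hc hb) ?_).congr'
    (natFloor_mul_rpow_div_rpow_eventuallyEq hc).symm
  exact ((tendsto_rpow_atTop (sub_pos.2 hab)).comp tendsto_natCast_atTop_atTop).const_mul_atTop hc

lemma tendsto_natFloor_mul_rpow_div_rpow_zero (hc : 0 < c) (hb : 0 < b) (hba : b < a) :
    Tendsto (fun n : ℕ => (⌊c * (n : ℝ) ^ b⌋₊ : ℝ) / (n : ℝ) ^ a) atTop (𝓝 0) := by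
  refine Tendsto.congr' (natFloor_mul_rpow_div_rpow_eventuallyEq hc).symm ?_
  have hpow : Tendsto (fun n : ℕ => c * (n : ℝ) ^ (b - a)) atTop (𝓝 0) := by
    simpa [neg_sub] using ((tendsto_rpow_neg_atTop (sub_pos.2 hba)).comp
      tendsto_natCast_atTop_atTop).const_mul c
  simpa using (tendsto_natFloor_mul_rpow_div_self hc hb).mul hpow

variable {Ω : Type*} [MeasurableSpace Ω] {P : Measure Ω} {ℓ : ℕ → ℕ}
  {rate : (n : ℕ) → Fin (ℓ n) → ℝ} {X : (n : ℕ) → Fin (ℓ n) → Ω → ℝ} {γ : ℝ}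

lemma tendsto_measure_natCard_le_rpow [IsProbabilityMeasure P] {φ : ℝ}
    (hX : ∀ n i, IsExpRV P (rate n i) (X n i)) (hrate : ∀ n i, rate n i ≤ φ)
    (hind : ∀ n, iIndepFun (X n) P) (hγ : 0 < γ) (ha : 0 < a)
    (hℓ : Tendsto (fun n : ℕ => (ℓ n : ℝ) / (n : ℝ) ^ (a + γ * φ)) atTop atTop) :
    Tendsto (fun n : ℕ => P {ω | (Nat.card {i // γ * Real.log n ≤ X n i ω} : ℝ) ≤ (n : ℝ) ^ a})
      atTop (𝓝 0) := by
  have hbound : ∀ᶠ n : ℕ in atTop,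
      P {ω | (Nat.card {i // γ * Real.log n ≤ X n i ω} : ℝ) ≤ (n : ℝ) ^ a}
        ≤ ENNReal.ofReal (2 * (n : ℝ) ^ (-a)) := by
    filter_upwards [eventually_gt_atTop 1, hℓ.eventually_ge_atTop 2] with n hn hℓn
    have hn' : (1 : ℝ) < n := Nat.one_lt_cast.2 hn
    have hpos : (0 : ℝ) < n := by positivity
    rw [Real.rpow_neg hpos.le, ← div_eq_mul_inv]
    refine measure_natCard_le_le_of_rate_le (hX n) (hrate n) (hind n)
      (mul_pos hγ (Real.log_pos hn')) (by positivity) ?_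
    rw [Fintype.card_fin, exp_neg_mul_mul_log hpos φ γ a]
    calc 2 * (n : ℝ) ^ a ≤ (ℓ n : ℝ) / (n : ℝ) ^ (a + γ * φ) * (n : ℝ) ^ a := by gcongr
      _ = (ℓ n : ℝ) * ((n : ℝ) ^ a / (n : ℝ) ^ (a + γ * φ)) := by ring
  have hlim : Tendsto (fun n : ℕ => ENNReal.ofReal (2 * (n : ℝ) ^ (-a))) atTop (𝓝 0) := by
    simpa using ENNReal.tendsto_ofReal
      (((tendsto_rpow_neg_atTop ha).comp tendsto_natCast_atTop_atTop).const_mul 2)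
  exact tendsto_of_tendsto_of_tendsto_of_le_of_le' tendsto_const_nhds hlim
    (Eventually.of_forall fun _ => zero_le) hbound

lemma tendsto_measure_rpow_le_natCard [IsFiniteMeasure P] {ψ : ℝ}
    (hX : ∀ n i, IsExpRV P (rate n i) (X n i)) (hrate : ∀ n i, ψ ≤ rate n i) (hγ : 0 < γ)
    (hℓ : Tendsto (fun n : ℕ => (ℓ n : ℝ) / (n : ℝ) ^ (a + γ * ψ)) atTop (𝓝 0)) :
    Tendsto (fun n : ℕ => P {ω | (n : ℝ) ^ a ≤ (Nat.card {i // γ * Real.log n ≤ X n i ω} : ℝ)})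
      atTop (𝓝 0) := by
  have hbound : ∀ᶠ n : ℕ in atTop,
      P {ω | (n : ℝ) ^ a ≤ (Nat.card {i // γ * Real.log n ≤ X n i ω} : ℝ)}
        ≤ ENNReal.ofReal ((ℓ n : ℝ) / (n : ℝ) ^ (a + γ * ψ)) := by
    filter_upwards [eventually_gt_atTop 1] with n hn
    have hn' : (1 : ℝ) < n := Nat.one_lt_cast.2 hn
    have hpos : (0 : ℝ) < n := by positivity
    convert measure_le_natCard_le_of_le_rate (hX n) (hrate n)
      (mul_pos hγ (Real.log_pos hn')) (Real.rpow_pos_of_pos hpos a) using 2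
    rw [Fintype.card_fin, exp_neg_mul_mul_log hpos ψ γ a]
    field_simp
  have hlim : Tendsto (fun n : ℕ => ENNReal.ofReal ((ℓ n : ℝ) / (n : ℝ) ^ (a + γ * ψ))) atTop
      (𝓝 0) := by
    simpa using ENNReal.tendsto_ofReal hℓ
  exact tendsto_of_tendsto_of_tendsto_of_le_of_le' tendsto_const_nhds hlim
    (Eventually.of_forall fun _ => zero_le) hbound

end Asymptotics

theorem stmt_0_general
    {Ω : Type*} [MeasurableSpace Ω] (P : Measure Ω) [IsProbabilityMeasure P]
    (φ ψ β c₁ c₂ : ℝ) (hφpos : 0 < φ) (hφψ : φ < ψ) (hβ : 1 / 2 < β)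
    (hc₁ : 0 < c₁) (hc₂ : 0 < c₂)
    (φr : (n : ℕ) → Fin ⌊c₁ * (n : ℝ) ^ β⌋₊ → ℝ)
    (ψr : (n : ℕ) → Fin ⌊c₂ * (n : ℝ) ^ β⌋₊ → ℝ)
    (hφr : ∀ n i, 0 < φr n i ∧ φr n i ≤ φ)
    (hψr : ∀ n i, ψ ≤ ψr n i)
    (Φ : (n : ℕ) → Fin ⌊c₁ * (n : ℝ) ^ β⌋₊ → Ω → ℝ)
    (Ψ : (n : ℕ) → Fin ⌊c₂ * (n : ℝ) ^ β⌋₊ → Ω → ℝ)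
    (hΦexp : ∀ n i, IsExpRV P (φr n i) (Φ n i))
    (hΨexp : ∀ n i, IsExpRV P (ψr n i) (Ψ n i))
    (hΦind : ∀ n, iIndepFun (Φ n) P) :
    ∃ γ κ : ℝ, 0 < γ ∧ 0 < κ ∧
      Tendsto (fun n : ℕ =>
          P {ω | (Nat.card {i // γ * Real.log n ≤ Φ n i ω} : ℝ) ≤ (n : ℝ) ^ ((1 : ℝ) / 2 + κ)})
        atTop (nhds 0) ∧
      Tendsto (fun n : ℕ =>
          P {ω | (n : ℝ) ^ ((1 : ℝ) / 2 - κ) ≤ (Nat.card {i // γ * Real.log n ≤ Ψ n i ω} : ℝ)})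
        atTop (nhds 0) := by
  have hβ₀ : 0 < β := by linarith
  have hφψ₀ : 0 < φ + ψ := by linarith
  -- `γ` puts `β - γ * (φ + ψ) / 2` at `1/2`, leaving the margin `2κ` on either side.
  set γ := (2 * β - 1) / (φ + ψ) with hγ_def
  set κ := (2 * β - 1) * (ψ - φ) / (4 * (φ + ψ)) with hκ_def
  have hγ : 0 < γ := div_pos (by linarith) hφψ₀
  have hκ : 0 < κ := div_pos (mul_pos (by linarith) (by linarith)) (by positivity)
  have hφ_exponent : 1 / 2 + κ + γ * φ = β - κ := by rw [hγ_def, hκ_def]; field_simp; ring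
  have hψ_exponent : 1 / 2 - κ + γ * ψ = β + κ := by rw [hγ_def, hκ_def]; field_simp; ring
  refine ⟨γ, κ, hγ, hκ, ?_, ?_⟩
  · refine tendsto_measure_natCard_le_rpow hΦexp (fun n i => (hφr n i).2) hΦind hγ
      (by positivity) ?_
    exact tendsto_natFloor_mul_rpow_div_rpow_atTop hc₁ hβ₀ (by linarith)
  · exact tendsto_measure_rpow_le_natCard hΨexp hψr hγ
      (tendsto_natFloor_mul_rpow_div_rpow_zero hc₂ hβ₀ (by linarith))

theorem stmt_0
    {Ω : Type*} [MeasurableSpace Ω] (P : Measure Ω) [IsProbabilityMeasure P]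
    (φ ψ β c₁ c₂ : ℝ) (hφpos : 0 < φ) (hφψ : φ < ψ) (hβ : 1 / 2 < β)
    (hc₁ : 0 < c₁) (hc₂ : 0 < c₂)
    (φr : (n : ℕ) → Fin ⌊c₁ * (n : ℝ) ^ β⌋₊ → ℝ)
    (ψr : (n : ℕ) → Fin ⌊c₂ * (n : ℝ) ^ β⌋₊ → ℝ)
    (hφr : ∀ n i, 0 < φr n i ∧ φr n i ≤ φ)
    (hψr : ∀ n i, ψ ≤ ψr n i)
    (Φ : (n : ℕ) → Fin ⌊c₁ * (n : ℝ) ^ β⌋₊ → Ω → ℝ)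
    (Ψ : (n : ℕ) → Fin ⌊c₂ * (n : ℝ) ^ β⌋₊ → Ω → ℝ)
    (hΦexp : ∀ n i, IsExpRV P (φr n i) (Φ n i))
    (hΨexp : ∀ n i, IsExpRV P (ψr n i) (Ψ n i))
    (hΦind : ∀ n, iIndepFun (Φ n) P)
    (hΨind : ∀ n, iIndepFun (Ψ n) P) :
    ∃ γ κ : ℝ, 0 < γ ∧ 0 < κ ∧
      Tendsto (fun n : ℕ =>
          P {ω | (Nat.card {i // γ * Real.log n ≤ Φ n i ω} : ℝ) ≤ (n : ℝ) ^ ((1 : ℝ) / 2 + κ)})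
        atTop (nhds 0) ∧
      Tendsto (fun n : ℕ =>
          P {ω | (n : ℝ) ^ ((1 : ℝ) / 2 - κ) ≤ (Nat.card {i // γ * Real.log n ≤ Ψ n i ω} : ℝ)})
        atTop (nhds 0) :=
  stmt_0_general P φ ψ β c₁ c₂ hφpos hφψ hβ hc₁ hc₂ φr ψr hφr hψr Φ Ψ hΦexp hΨexp hΦind
end

section
/- Let ψ > 0, β > 1/2, c₂ > 0, and let γ > 0 and κ > 0 satisfy β − 1/2 + κ < ψγ. For each n ∈ ℕ set ℓₙ = ⌊c₂ nᵝ⌋ and let Ψⁿ₁,…,Ψⁿ_{ℓₙ} be mutually independent random variables, each exponentially distributed with some rate lying in [ψ, ∞). Then P(#{i ≤ ℓₙ : Ψⁿᵢ ≥ γ log n} ≥ n^{1/2−κ}) → 0 as n → ∞. -/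
/-!
Since every rate is at least `ψ`, each event
`{Ψⁿᵢ ≥ γ log n}` has probability at most `exp (-ψ γ log n) = n^(-ψγ)`, so the expected count is
at most `c₂ n^β · n^(-ψγ)`, and Markov's inequality bounds the probability that the count reaches
`n^(1/2-κ)` by `c₂ n^(β - ψγ - (1/2 - κ))`, which tends to `0` because `β - 1/2 + κ < ψγ`.
-/

open MeasureTheory ProbabilityTheory Filter

open Topology

/-- `IsExpRV` only controls the strict tail `{t < X}`; the closed tail follows by letting `t ↑ c`. -/
theorem IsExpRV.measure_ge_le_exp {Ω : Type*} [MeasurableSpace Ω] {P : Measure Ω} {rate : ℝ}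
    {X : Ω → ℝ} (hX : IsExpRV P rate X) {c : ℝ} (hc : 0 < c) :
    P {ω | c ≤ X ω} ≤ ENNReal.ofReal (Real.exp (-rate * c)) := by
  have hlim : Tendsto (fun t => ENNReal.ofReal (Real.exp (-rate * t))) (𝓝[<] c)
      (𝓝 (ENNReal.ofReal (Real.exp (-rate * c)))) :=
    (ENNReal.continuous_ofReal.comp (by fun_prop)).continuousAt.tendsto.mono_left
      nhdsWithin_le_nhds
  refine ge_of_tendsto hlim ?_
  filter_upwards [Ioo_mem_nhdsLT hc] with t ht
  rw [← hX.2 t ht.1.le]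
  exact measure_mono fun ω (hω : c ≤ X ω) => ht.2.trans_le hω

theorem measure_natCard_mem_ge_le {Ω ι : Type*} [MeasurableSpace Ω] [Fintype ι] (μ : Measure Ω)
    {A : ι → Set Ω} (hA : ∀ i, MeasurableSet (A i)) {p a : ℝ}
    (hp : ∀ i, μ (A i) ≤ ENNReal.ofReal p) (ha : 0 < a) :
    μ {ω | a ≤ Nat.card {i // ω ∈ A i}} ≤ ENNReal.ofReal (Fintype.card ι * p / a) := by
  classical
  set f : Ω → ENNReal := fun ω => ∑ i, (A i).indicator 1 ω
  have hcard : ∀ ω, (Nat.card {i // ω ∈ A i} : ENNReal) = f ω := by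
    intro ω
    simp [f, Set.indicator_apply, Finset.sum_boole, Nat.card_eq_fintype_card, Fintype.card_subtype]
  have hf : Measurable f := Finset.measurable_sum _ fun i _ => measurable_one.indicator (hA i)
  have hlint : ∫⁻ ω, f ω ∂μ = ∑ i, μ (A i) := by
    rw [lintegral_finsetSum _ fun i _ => measurable_one.indicator (hA i)]
    simp [lintegral_indicator_one (hA _)]
  calc μ {ω | a ≤ Nat.card {i // ω ∈ A i}}
      = μ {ω | ENNReal.ofReal a ≤ f ω} := by simp_rw [← hcard, ENNReal.ofReal_le_natCast]
    _ ≤ (∑ i, μ (A i)) / ENNReal.ofReal a :=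
      hlint ▸ meas_ge_le_lintegral_div hf.aemeasurable (by simpa using ha) ENNReal.ofReal_ne_top
    _ ≤ (Fintype.card ι * ENNReal.ofReal p) / ENNReal.ofReal a := by
      gcongr
      exact (Finset.sum_le_card_nsmul _ _ _ fun i _ => hp i).trans_eq (by simp [nsmul_eq_mul])
    _ = ENNReal.ofReal (Fintype.card ι * p / a) := by
      rw [ENNReal.ofReal_div_of_pos ha, ENNReal.ofReal_mul (by positivity), ENNReal.ofReal_natCast]

theorem tendsto_natFloor_mul_rpow_mul_rpow_div_rpow {c a b e : ℝ} (hc : 0 ≤ c) (h : a < b + e) :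
    Tendsto (fun n : ℕ => (⌊c * (n : ℝ) ^ a⌋₊ : ℝ) * (n : ℝ) ^ (-b) / (n : ℝ) ^ e) atTop (𝓝 0) := by
  have hlim : Tendsto (fun n : ℕ => c * (n : ℝ) ^ (a - (b + e))) atTop (𝓝 0) := by
    simpa using ((tendsto_rpow_neg_atTop (y := b + e - a) (by linarith)).comp
      tendsto_natCast_atTop_atTop).const_mul c
  refine tendsto_of_tendsto_of_tendsto_of_le_of_le' tendsto_const_nhds hlim
    (Eventually.of_forall fun n => by positivity) ?_
  filter_upwards [eventually_gt_atTop 0] with n hn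
  have hn0 : (0 : ℝ) < n := by exact_mod_cast hn
  calc (⌊c * (n : ℝ) ^ a⌋₊ : ℝ) * (n : ℝ) ^ (-b) / (n : ℝ) ^ e
      ≤ c * (n : ℝ) ^ a * (n : ℝ) ^ (-b) / (n : ℝ) ^ e := by
        gcongr
        exact Nat.floor_le (by positivity)
    _ = c * (n : ℝ) ^ (a - (b + e)) := by
        rw [sub_add_eq_sub_sub, Real.rpow_sub hn0, Real.rpow_sub hn0, Real.rpow_neg hn0.le]
        ring

theorem stmt_2_general
    {Ω : Type*} [MeasurableSpace Ω] (P : Measure Ω)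
    (ψ β c₂ γ κ : ℝ) (hc₂ : 0 < c₂)
    (hγ : 0 < γ) (hκγ : β - 1 / 2 + κ < ψ * γ)
    (ψr : (n : ℕ) → Fin ⌊c₂ * (n : ℝ) ^ β⌋₊ → ℝ)
    (hψr : ∀ n i, ψ ≤ ψr n i)
    (Ψ : (n : ℕ) → Fin ⌊c₂ * (n : ℝ) ^ β⌋₊ → Ω → ℝ)
    (hΨexp : ∀ n i, IsExpRV P (ψr n i) (Ψ n i)) :
    Tendsto (fun n : ℕ =>
        P {ω | (n : ℝ) ^ ((1 : ℝ) / 2 - κ) ≤ (Nat.card {i // γ * Real.log n ≤ Ψ n i ω} : ℝ)})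
      atTop (nhds 0) := by
  have hbound := tendsto_natFloor_mul_rpow_mul_rpow_div_rpow (a := β) (b := ψ * γ)
    (e := 1 / 2 - κ) hc₂.le (by linarith)
  refine tendsto_of_tendsto_of_tendsto_of_le_of_le' tendsto_const_nhds
    (by simpa using ENNReal.tendsto_ofReal hbound) (Eventually.of_forall fun _ => zero_le) ?_
  filter_upwards [eventually_gt_atTop 1] with n hn
  have hn0 : (0 : ℝ) < n := by positivity
  have hlog : 0 < γ * Real.log n := mul_pos hγ (Real.log_pos (by exact_mod_cast hn))
  have htail : ∀ i, P {ω | γ * Real.log n ≤ Ψ n i ω} ≤ ENNReal.ofReal ((n : ℝ) ^ (-(ψ * γ))) := by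
    intro i
    refine ((hΨexp n i).measure_ge_le_exp hlog).trans (ENNReal.ofReal_le_ofReal ?_)
    rw [Real.rpow_def_of_pos hn0, Real.exp_le_exp]
    linarith [mul_le_mul_of_nonneg_right (hψr n i) hlog.le]
  simpa using measure_natCard_mem_ge_le P (fun i => measurableSet_le measurable_const (hΨexp n i).1)
    htail (a := (n : ℝ) ^ ((1 : ℝ) / 2 - κ)) (by positivity)

theorem stmt_2
    {Ω : Type*} [MeasurableSpace Ω] (P : Measure Ω) [IsProbabilityMeasure P]
    (ψ β c₂ γ κ : ℝ) (hψpos : 0 < ψ) (hβ : 1 / 2 < β) (hc₂ : 0 < c₂)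
    (hγ : 0 < γ) (hκ : 0 < κ) (hκγ : β - 1 / 2 + κ < ψ * γ)
    (ψr : (n : ℕ) → Fin ⌊c₂ * (n : ℝ) ^ β⌋₊ → ℝ)
    (hψr : ∀ n i, ψ ≤ ψr n i)
    (Ψ : (n : ℕ) → Fin ⌊c₂ * (n : ℝ) ^ β⌋₊ → Ω → ℝ)
    (hΨexp : ∀ n i, IsExpRV P (ψr n i) (Ψ n i))
    (hΨind : ∀ n, iIndepFun (Ψ n) P) :
    Tendsto (fun n : ℕ =>
        P {ω | (n : ℝ) ^ ((1 : ℝ) / 2 - κ) ≤ (Nat.card {i // γ * Real.log n ≤ Ψ n i ω} : ℝ)})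
      atTop (nhds 0) :=
  stmt_2_general P ψ β c₂ γ κ hc₂ hγ hκγ ψr hψr Ψ hΨexp
end

section
/- Let φ > 0 and let Φ₁,…,Φ_ℓ be mutually independent random variables, each exponentially distributed with some rate lying in (0, φ]. Then for every θ > 0, every α ≥ 0 and every M ≥ 0, P(#{i ≤ ℓ : Φᵢ ≥ θ} ≤ M) ≤ exp(αM − ℓ e^{−φθ}(1 − e^{−α})). -/
/-!
Chernoff bound for the lower tail. The count is a sum of independent indicators of the events
`{θ ≤ Φᵢ}`, each of probability at least `e^{-φθ}` since the rates are at most `φ`. The moment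
generating function at `-α` of such an indicator is `1 - pᵢ(1 - e^{-α}) ≤ exp(-e^{-φθ}(1 - e^{-α}))`,
and Markov's inequality for `exp(-α · count)` gives the bound.
-/

open MeasureTheory ProbabilityTheory Filter

section

open Real

lemma card_subtype_mem_eq_sum_indicator {α ι : Type*} [Fintype ι] (A : ι → Set α) (x : α) :
    (Nat.card {i // x ∈ A i} : ℝ) = (∑ i, (A i).indicator 1) x := by
  classical
  simp [Nat.card_eq_fintype_card, Fintype.card_subtype, Finset.sum_apply, Set.indicator_apply]

lemma exp_mul_indicator_one {α : Type*} (A : Set α) (t : ℝ) :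
    (fun x ↦ exp (t * A.indicator 1 x)) = fun x ↦ 1 + (exp t - 1) * A.indicator 1 x := by
  funext x
  by_cases h : x ∈ A <;> simp [h]

variable {Ω ι : Type*} [MeasurableSpace Ω] {P : Measure Ω}

lemma ProbabilityTheory.iIndepFun.iIndepSet_preimage {β : Type*} [MeasurableSpace β]
    {f : ι → Ω → β} (hf : iIndepFun f P) (hf_meas : ∀ i, Measurable (f i)) {s : ι → Set β} (hs : ∀ i, MeasurableSet (s i)) :
    iIndepSet (fun i ↦ f i ⁻¹' s i) P :=
  (iIndepSet_iff_meas_biInter fun i ↦ hf_meas i (hs i)).2 fun S ↦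
    hf.measure_inter_preimage_eq_mul S fun i _ ↦ hs i

lemma IsExpRV.exp_neg_mul_le_measureReal [IsFiniteMeasure P] {r φ θ : ℝ} {X : Ω → ℝ}
    (hX : IsExpRV P r X) (hr : r ≤ φ) (hθ : 0 ≤ θ) :
    exp (-φ * θ) ≤ P.real {ω | θ ≤ X ω} := by
  have h_tail : exp (-r * θ) = P.real {ω | θ < X ω} := by
    rw [measureReal_def, hX.2 θ hθ, ENNReal.toReal_ofReal (exp_pos _).le]
  calc exp (-φ * θ) ≤ exp (-r * θ) := exp_le_exp.2 (by nlinarith)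
    _ = P.real {ω | θ < X ω} := h_tail
    _ ≤ P.real {ω | θ ≤ X ω} := measureReal_mono fun ω (h : θ < X ω) ↦ h.le

section

variable [IsProbabilityMeasure P] {A : Set Ω}

lemma integrable_exp_mul_indicator_one (hA : MeasurableSet A) (t : ℝ) :
    Integrable (fun ω ↦ exp (t * A.indicator 1 ω)) P := by
  rw [exp_mul_indicator_one]
  exact (integrable_const 1).add (((integrable_const 1).indicator hA).const_mul _)

lemma mgf_indicator_one (hA : MeasurableSet A) (t : ℝ) :
    mgf (A.indicator 1) P t = 1 + P.real A * (exp t - 1) := by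
  rw [mgf, exp_mul_indicator_one, integral_add (integrable_const 1)
    (((integrable_const 1).indicator hA).const_mul _), integral_const_mul]
  simp only [Pi.one_def, integral_indicator_const (1 : ℝ) hA, integral_const, probReal_univ,
    smul_eq_mul]
  ring

lemma mgf_indicator_one_neg_le {q α : ℝ} (hA : MeasurableSet A) (hq : q ≤ P.real A)
    (hα : 0 ≤ α) :
    mgf (A.indicator 1) P (-α) ≤ exp (-(q * (1 - exp (-α)))) := by
  have h_gap : 0 ≤ 1 - exp (-α) := sub_nonneg.2 (exp_le_one_iff.2 (neg_nonpos.2 hα))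
  calc mgf (A.indicator 1) P (-α) = 1 - P.real A * (1 - exp (-α)) := by
        rw [mgf_indicator_one hA]; ring
    _ ≤ 1 - q * (1 - exp (-α)) := by nlinarith
    _ ≤ exp (-(q * (1 - exp (-α)))) := by linarith [add_one_le_exp (-(q * (1 - exp (-α))))]

theorem measureReal_card_mem_le_le [Fintype ι] {A : ι → Set Ω} (hA : ∀ i, MeasurableSet (A i))
    (h_ind : iIndepSet A P) {q α : ℝ} (hq : ∀ i, q ≤ P.real (A i)) (hα : 0 ≤ α) (M : ℝ) :
    P.real {ω | (Nat.card {i // ω ∈ A i} : ℝ) ≤ M} ≤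
      exp (α * M - Fintype.card ι * q * (1 - exp (-α))) := by
  set X : ι → Ω → ℝ := fun i ↦ (A i).indicator 1
  have hX_meas : ∀ i, Measurable (X i) := fun i ↦ measurable_const.indicator (hA i)
  have hX_ind : iIndepFun X P := h_ind.iIndepFun_indicator
  have h_chernoff := measure_le_le_exp_mul_mgf (X := ∑ i, X i) M (neg_nonpos.2 hα)
    (hX_ind.integrable_exp_mul_sum hX_meas fun i _ ↦ integrable_exp_mul_indicator_one (hA i) _)
  rw [hX_ind.mgf_sum hX_meas, neg_neg] at h_chernoff
  simp_rw [card_subtype_mem_eq_sum_indicator]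
  calc P.real {ω | (∑ i, X i) ω ≤ M} ≤ exp (α * M) * ∏ i, mgf (X i) P (-α) := h_chernoff
    _ ≤ exp (α * M) * ∏ _i : ι, exp (-(q * (1 - exp (-α)))) := by
        gcongr with i
        · exact fun i _ ↦ mgf_nonneg
        · exact mgf_indicator_one_neg_le (hA i) (hq i) hα
    _ = exp (α * M - Fintype.card ι * q * (1 - exp (-α))) := by
        rw [Finset.prod_const, Finset.card_univ, ← exp_nat_mul, ← exp_add]
        ring_nf

end

end

theorem stmt_7_general
    {Ω : Type*} [MeasurableSpace Ω] (P : Measure Ω) [IsProbabilityMeasure P]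
    (φ : ℝ) (ℓ : ℕ)
    (φr : Fin ℓ → ℝ) (hφr : ∀ i, 0 < φr i ∧ φr i ≤ φ)
    (Φ : Fin ℓ → Ω → ℝ)
    (hΦexp : ∀ i, IsExpRV P (φr i) (Φ i))
    (hΦind : iIndepFun Φ P)
    (θ α M : ℝ) (hθ : 0 < θ) (hα : 0 ≤ α) :
    P {ω | (Nat.card {i // θ ≤ Φ i ω} : ℝ) ≤ M} ≤
      ENNReal.ofReal (Real.exp (α * M - ℓ * Real.exp (-φ * θ) * (1 - Real.exp (-α)))) := by
  have h_meas : ∀ i, Measurable (Φ i) := fun i ↦ (hΦexp i).1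
  have h_bound := measureReal_card_mem_le_le (A := fun i ↦ Φ i ⁻¹' Set.Ici θ)
    (fun i ↦ h_meas i measurableSet_Ici) (hΦind.iIndepSet_preimage h_meas fun _ ↦ measurableSet_Ici)
    (fun i ↦ (hΦexp i).exp_neg_mul_le_measureReal (hφr i).2 hθ.le) hα M
  rw [Fintype.card_fin] at h_bound
  rw [← ofReal_measureReal]
  exact ENNReal.ofReal_le_ofReal h_bound

theorem stmt_7
    {Ω : Type*} [MeasurableSpace Ω] (P : Measure Ω) [IsProbabilityMeasure P]
    (φ : ℝ) (hφ : 0 < φ) (ℓ : ℕ)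
    (φr : Fin ℓ → ℝ) (hφr : ∀ i, 0 < φr i ∧ φr i ≤ φ)
    (Φ : Fin ℓ → Ω → ℝ)
    (hΦexp : ∀ i, IsExpRV P (φr i) (Φ i))
    (hΦind : iIndepFun Φ P)
    (θ α M : ℝ) (hθ : 0 < θ) (hα : 0 ≤ α) (hM : 0 ≤ M) :
    P {ω | (Nat.card {i // θ ≤ Φ i ω} : ℝ) ≤ M} ≤
      ENNReal.ofReal (Real.exp (α * M - ℓ * Real.exp (-φ * θ) * (1 - Real.exp (-α)))) :=
  stmt_7_general P φ ℓ φr hφr Φ hΦexp hΦind θ α M hθ hα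
end

section
/- Let T > 0 and μ ≥ 0. Let X, ξ, W, V, e : [0, T] → ℝ be continuous functions and x₀, ξ₀, b, β ∈ ℝ such that X(t) = x₀ + W(t) + b·t + μ·∫₀ᵗ X(s)⁻ ds + e(t) and ξ(t) = ξ₀ + V(t) + β·t + μ·∫₀ᵗ ξ(s)⁻ ds for every t ∈ [0, T]. Then sup_{t ∈ [0,T]} |X(t) − ξ(t)| ≤ ( |x₀ − ξ₀| + |b − β|·T + sup_{t ∈ [0,T]} |W(t) − V(t)| + sup_{t ∈ [0,T]} |e(t)| ) · exp(μT). -/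
/-!
Subtracting the two equations, the initial values, drifts, driving terms and the error `e`
contribute at most `C = |x₀ - ξ₀| + |b - β| T + sup |W - V| + sup |e|`, and since `x ↦ x⁻` is
1-Lipschitz the two reflection terms differ by at most `μ ∫₀ᵗ |X - ξ|`. Grönwall's inequality in
integral form then gives `|X t - ξ t| ≤ C exp (μ t)`.
-/

open MeasureTheory intervalIntegral Set Real Topology

theorem add_mul_gronwallBound_zero (C K t : ℝ) :
    C + K * gronwallBound 0 K C t = C * exp (K * t) := by
  rcases eq_or_ne K 0 with rfl | hK
  · simp
  · rw [gronwallBound_of_K_ne_0 hK]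
    field_simp
    ring

theorem hasDerivWithinAt_integral_Ici_of_continuousOn {u : ℝ → ℝ} {a b x : ℝ}
    (hu : ContinuousOn u (Icc a b)) (hx : x ∈ Ico a b) :
    HasDerivWithinAt (fun t => ∫ s in a..t, u s) (u x) (Ici x) x := by
  have hIcc : Icc a b ∈ 𝓝[>] x := Icc_mem_nhdsGT_of_mem hx
  exact integral_hasDerivWithinAt_right
    ((hu.mono (Icc_subset_Icc_right hx.2.le)).intervalIntegrable_of_Icc hx.1)
    ((hu.stronglyMeasurableAtFilter_nhdsWithin measurableSet_Icc x).filter_mono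
      (nhdsWithin_le_of_mem hIcc))
    ((hu x (Ico_subset_Icc_self hx)).mono_of_mem_nhdsWithin hIcc)

theorem le_mul_exp_of_le_add_mul_integral {u : ℝ → ℝ} {C K a b : ℝ} (hK : 0 ≤ K)
    (hu : ContinuousOn u (Icc a b))
    (hle : ∀ t ∈ Icc a b, u t ≤ C + K * ∫ s in a..t, u s) :
    ∀ t ∈ Icc a b, u t ≤ C * exp (K * (t - a)) := by
  intro t ht
  -- `F' = u ≤ C + K F`: the differential form of Grönwall's inequality applies to the primitive.
  set F : ℝ → ℝ := fun t => ∫ s in a..t, u s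
  have hF : F t ≤ gronwallBound 0 K C (t - a) :=
    le_gronwallBound_of_liminf_deriv_right_le (f' := u)
      ((continuousOn_primitive_interval'
        (hu.intervalIntegrable_of_Icc (ht.1.trans ht.2)) left_mem_uIcc).mono Icc_subset_uIcc)
      (fun x hx _ => (hasDerivWithinAt_integral_Ici_of_continuousOn hu hx).liminf_right_slope_le)
      (by simp) (fun x hx => by linarith [hle x (Ico_subset_Icc_self hx)]) t ht
  calc u t ≤ C + K * F t := hle t ht
    _ ≤ C + K * gronwallBound 0 K C (t - a) := by gcongr
    _ = C * exp (K * (t - a)) := add_mul_gronwallBound_zero C K (t - a)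

theorem abs_integral_negPart_sub_le {f g : ℝ → ℝ} {a b : ℝ} (hab : a ≤ b)
    (hf : ContinuousOn f (Icc a b)) (hg : ContinuousOn g (Icc a b)) :
    |(∫ s in a..b, max (-f s) 0) - ∫ s in a..b, max (-g s) 0| ≤ ∫ s in a..b, |f s - g s| := by
  have hf' : IntervalIntegrable (fun s => max (-f s) 0) volume a b :=
    (hf.neg.sup continuousOn_const).intervalIntegrable_of_Icc hab
  have hg' : IntervalIntegrable (fun s => max (-g s) 0) volume a b :=
    (hg.neg.sup continuousOn_const).intervalIntegrable_of_Icc hab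
  rw [← integral_sub hf' hg']
  refine (abs_integral_le_integral_abs hab).trans <|
    integral_mono_on hab (hf'.sub hg').abs ((hf.sub hg).abs.intervalIntegrable_of_Icc hab) ?_
  intro s _
  calc |max (-f s) 0 - max (-g s) 0| ≤ |-f s - -g s| := abs_max_sub_max_le_abs _ _ _
    _ = |f s - g s| := by rw [neg_sub_neg, abs_sub_comm]

theorem ContinuousOn.le_iSup_Icc {g : ℝ → ℝ} {a b t : ℝ} (hg : ContinuousOn g (Icc a b))
    (ht : t ∈ Icc a b) : g t ≤ ⨆ s : Icc a b, g s := by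
  refine le_ciSup (f := fun s : Icc a b => g s)
    ((isCompact_Icc.bddAbove_image hg).mono ?_) (⟨t, ht⟩ : Icc a b)
  rintro _ ⟨s, rfl⟩
  exact mem_image_of_mem g s.2

theorem abs_sub_le_of_eq_add_integral_negPart {X ξ W V e : ℝ → ℝ} {x₀ ξ₀ b β μ t : ℝ}
    (hμ : 0 ≤ μ) (ht : 0 ≤ t)
    (hX : ContinuousOn X (Icc 0 t)) (hξ : ContinuousOn ξ (Icc 0 t))
    (hXeq : X t = x₀ + W t + b * t + μ * (∫ s in (0 : ℝ)..t, max (-(X s)) 0) + e t)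
    (hξeq : ξ t = ξ₀ + V t + β * t + μ * ∫ s in (0 : ℝ)..t, max (-(ξ s)) 0) :
    |X t - ξ t| ≤ |x₀ - ξ₀| + |b - β| * t + |W t - V t| + |e t| +
      μ * ∫ s in (0 : ℝ)..t, |X s - ξ s| := by
  set I := (∫ s in (0 : ℝ)..t, max (-(X s)) 0) - ∫ s in (0 : ℝ)..t, max (-(ξ s)) 0
  have hI : |μ * I| ≤ μ * ∫ s in (0 : ℝ)..t, |X s - ξ s| := by
    rw [abs_mul, abs_of_nonneg hμ]
    exact mul_le_mul_of_nonneg_left (abs_integral_negPart_sub_le ht hX hξ) hμ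
  have hdiff : X t - ξ t = (x₀ - ξ₀) + (b - β) * t + (W t - V t) + e t + μ * I := by
    rw [hXeq, hξeq]; ring
  have hbt : |(b - β) * t| = |b - β| * t := by rw [abs_mul, abs_of_nonneg ht]
  rw [hdiff]
  linarith [abs_add_le (x₀ - ξ₀ + (b - β) * t + (W t - V t) + e t) (μ * I),
    abs_add_le (x₀ - ξ₀ + (b - β) * t + (W t - V t)) (e t),
    abs_add_le (x₀ - ξ₀ + (b - β) * t) (W t - V t), abs_add_le (x₀ - ξ₀) ((b - β) * t)]

theorem stmt_14 (T μ : ℝ) (hT : 0 < T) (hμ : 0 ≤ μ)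
    (X ξ W V e : ℝ → ℝ) (x₀ ξ₀ b β : ℝ)
    (hX : ContinuousOn X (Set.Icc 0 T)) (hξ : ContinuousOn ξ (Set.Icc 0 T))
    (hW : ContinuousOn W (Set.Icc 0 T)) (hV : ContinuousOn V (Set.Icc 0 T))
    (he : ContinuousOn e (Set.Icc 0 T))
    (hXeq : ∀ t ∈ Set.Icc (0 : ℝ) T,
      X t = x₀ + W t + b * t + μ * (∫ s in (0 : ℝ)..t, max (-(X s)) 0) + e t)
    (hξeq : ∀ t ∈ Set.Icc (0 : ℝ) T,
      ξ t = ξ₀ + V t + β * t + μ * ∫ s in (0 : ℝ)..t, max (-(ξ s)) 0) :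
    (⨆ t : Set.Icc (0 : ℝ) T, |X t - ξ t|) ≤
      (|x₀ - ξ₀| + |b - β| * T + (⨆ t : Set.Icc (0 : ℝ) T, |W t - V t|) +
          ⨆ t : Set.Icc (0 : ℝ) T, |e t|) * Real.exp (μ * T) := by
  have h0T : (0 : ℝ) ∈ Icc 0 T := ⟨le_rfl, hT.le⟩
  have : Nonempty (Icc (0 : ℝ) T) := ⟨⟨0, h0T⟩⟩
  set S₁ := ⨆ t : Icc (0 : ℝ) T, |W t - V t|
  set S₂ := ⨆ t : Icc (0 : ℝ) T, |e t|
  have hS₁ : ∀ t ∈ Icc 0 T, |W t - V t| ≤ S₁ := fun t ht => (hW.sub hV).abs.le_iSup_Icc ht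
  have hS₂ : ∀ t ∈ Icc 0 T, |e t| ≤ S₂ := fun t ht => he.abs.le_iSup_Icc ht
  set C := |x₀ - ξ₀| + |b - β| * T + S₁ + S₂
  have hC : 0 ≤ C := by
    have := mul_nonneg (abs_nonneg (b - β)) hT.le
    linarith [abs_nonneg (x₀ - ξ₀), (abs_nonneg _).trans (hS₁ 0 h0T),
      (abs_nonneg _).trans (hS₂ 0 h0T)]
  have hbound : ∀ t ∈ Icc 0 T, |X t - ξ t| ≤ C + μ * ∫ s in (0 : ℝ)..t, |X s - ξ s| := by
    intro t ht
    have hsub : Icc 0 t ⊆ Icc 0 T := Icc_subset_Icc_right ht.2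
    have := abs_sub_le_of_eq_add_integral_negPart hμ ht.1 (hX.mono hsub) (hξ.mono hsub)
      (hXeq t ht) (hξeq t ht)
    linarith [hS₁ t ht, hS₂ t ht, mul_le_mul_of_nonneg_left ht.2 (abs_nonneg (b - β))]
  have hgronwall := le_mul_exp_of_le_add_mul_integral hμ (hX.sub hξ).abs hbound
  refine ciSup_le fun ⟨t, ht⟩ => (hgronwall t ht).trans ?_
  rw [sub_zero]
  gcongr
  exact ht.2
end
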